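/- Let n ≥ 2 and ρ > 0. Suppose that for each k = 0,…,n there exist a polynomial q_k of exact degree k and a real number λ_k such that U_n^ρ q_k = λ_k q_k, with q_n monic and 1 = λ₀ = λ₁ > λ₂ > … > λ_n > 0. Then for every f ∈ C[0,1], (1−λ_n)^{−M} (⊕^M U_n^ρ f − L_n^ρ f) converges uniformly on [0,1], as M → ∞, to −[F_{n,0}^ρ, F_{n,1}^ρ, …, F_{n,n}^ρ; f] · q_n. -/

import Mathlib

open MeasureTheory

/-- Euler Beta function `B(a,b) = ∫₀¹ t^(a-1) (1-t)^(b-1) dt`. -/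
noncomputable def betaFn (a b : ℝ) : ℝ :=
  ∫ t in (0:ℝ)..1, t ^ (a - 1) * (1 - t) ^ (b - 1)

/-- The functionals `F_{n,k}^ρ`. -/
noncomputable def Ffun (n k : ℕ) (ρ : ℝ) (f : ℝ → ℝ) : ℝ :=
  if k = 0 then f 0
  else if k = n then f 1
  else (betaFn ((k : ℝ) * ρ) (((n : ℝ) - (k : ℝ)) * ρ))⁻¹ *
    ∫ t in (0:ℝ)..1, t ^ ((k : ℝ) * ρ - 1) * (1 - t) ^ (((n : ℝ) - (k : ℝ)) * ρ - 1) * f t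

/-- Bernstein basis polynomial `p_{n,k}(x)`. -/
noncomputable def bern (n k : ℕ) (x : ℝ) : ℝ :=
  (n.choose k : ℝ) * x ^ k * (1 - x) ^ (n - k)

/-- The operator `U_n^ρ`. -/
noncomputable def Uop (n : ℕ) (ρ : ℝ) (f : ℝ → ℝ) (x : ℝ) : ℝ :=
  ∑ k ∈ Finset.range (n + 1), Ffun n k ρ f * bern n k x

/-- The iterated Boolean sum `⊕^M U_n^ρ = I − (I − U_n^ρ)^M`. -/
noncomputable def boolSum (n : ℕ) (ρ : ℝ) (M : ℕ) (f : ℝ → ℝ) : ℝ → ℝ :=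
  fun x => f x - ((fun (g : ℝ → ℝ) (y : ℝ) => g y - Uop n ρ g y)^[M] f) x

/-!
Expand the interpolant `L = ∑ cₖ Qₖ` in the eigenpolynomials (with `Q₀ = 1`, since `U` fixes
constants). As `F_{n,k}(f - L) = 0` for every `k`, `U` annihilates `f - L`, so
`(I - U)^M f = f - L + ∑ cₖ (1 - λₖ)^M Qₖ` and `⊕^M U f - L = -∑ cₖ (1 - λₖ)^M Qₖ`.
After division by `(1 - λₙ)^M`, each term with `k < n` decays geometrically because
`0 ≤ 1 - λₖ < 1 - λₙ`, leaving `-cₙ qₙ`; and `cₙ` is the leading coefficient of `L`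
because `qₙ` is monic.
-/

open Set Filter Topology Polynomial

lemma intervalIntegrable_betaWeight {a b : ℝ} (ha : 0 < a) (hb : 0 < b) :
    IntervalIntegrable (fun t : ℝ => t ^ (a - 1) * (1 - t) ^ (b - 1)) volume 0 1 := by
  have hleft :
      IntervalIntegrable (fun t : ℝ => t ^ (a - 1) * (1 - t) ^ (b - 1)) volume 0 (1 / 2) :=
    (intervalIntegral.intervalIntegrable_rpow' (by linarith)).mul_continuousOn <|
      ContinuousOn.rpow_const (by fun_prop) fun t ht => by
        rw [uIcc_of_le (by norm_num)] at ht
        exact Or.inl (by linarith [ht.2])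
  have hright :
      IntervalIntegrable (fun t : ℝ => t ^ (a - 1) * (1 - t) ^ (b - 1)) volume (1 / 2) 1 := by
    have h : IntervalIntegrable (fun t : ℝ => (1 - t) ^ (b - 1)) volume (1 / 2) 1 := by
      convert ((intervalIntegral.intervalIntegrable_rpow' (r := b - 1) (by linarith)
        (a := 0) (b := 1 / 2)).comp_sub_left 1).symm using 1 <;> norm_num
    refine h.continuousOn_mul (ContinuousOn.rpow_const continuousOn_id fun t ht => ?_)
    rw [uIcc_of_le (by norm_num)] at ht
    exact Or.inl (by linarith [ht.1])
  exact hleft.trans hright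

lemma betaFn_pos {a b : ℝ} (ha : 0 < a) (hb : 0 < b) : 0 < betaFn a b :=
  intervalIntegral.intervalIntegral_pos_of_pos_on (intervalIntegrable_betaWeight ha hb)
    (fun _ ht => mul_pos (Real.rpow_pos_of_pos ht.1 _)
      (Real.rpow_pos_of_pos (sub_pos.2 ht.2) _))
    zero_lt_one

section Ffun

variable {n k : ℕ} {ρ : ℝ}

lemma intervalIntegrable_Ffun_integrand (hρ : 0 < ρ) (hk : k ≠ 0) (hkn : k < n) {g : ℝ → ℝ}
    (hg : ContinuousOn g (Icc 0 1)) :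
    IntervalIntegrable
      (fun t : ℝ => t ^ ((k : ℝ) * ρ - 1) * (1 - t) ^ (((n : ℝ) - (k : ℝ)) * ρ - 1) * g t)
      volume 0 1 := by
  have hkn' : (k : ℝ) < n := by exact_mod_cast hkn
  have hk' : (0 : ℝ) < k := by positivity
  exact (intervalIntegrable_betaWeight (by positivity) (mul_pos (by linarith) hρ)).mul_continuousOn
    (by rwa [uIcc_of_le zero_le_one])

lemma Ffun_const_mul (c : ℝ) (g : ℝ → ℝ) :
    Ffun n k ρ (fun t => c * g t) = c * Ffun n k ρ g := by
  unfold Ffun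
  split_ifs
  · rfl
  · rfl
  · simp only [mul_left_comm _ c, intervalIntegral.integral_const_mul]

lemma Ffun_const (hρ : 0 < ρ) (hk : k ≤ n) (c : ℝ) : Ffun n k ρ (fun _ => c) = c := by
  unfold Ffun
  split_ifs with hk0 hkn
  · rfl
  · rfl
  · have hkn' : (k : ℝ) < n := by exact_mod_cast lt_of_le_of_ne hk hkn
    have hk' : (0 : ℝ) < k := by positivity
    have hB := betaFn_pos (mul_pos hk' hρ) (mul_pos (sub_pos.2 hkn') hρ)
    rw [intervalIntegral.integral_mul_const, ← betaFn, inv_mul_cancel_left₀ hB.ne']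

lemma Ffun_sum (hρ : 0 < ρ) (hk : k ≤ n) {ι : Type*} (s : Finset ι) {g : ι → ℝ → ℝ}
    (hg : ∀ i ∈ s, ContinuousOn (g i) (Icc 0 1)) :
    Ffun n k ρ (fun x => ∑ i ∈ s, g i x) = ∑ i ∈ s, Ffun n k ρ (g i) := by
  unfold Ffun
  split_ifs with hk0 hkn
  · rfl
  · rfl
  · rw [← Finset.mul_sum, ← intervalIntegral.integral_finsetSum fun i hi =>
      intervalIntegrable_Ffun_integrand hρ hk0 (lt_of_le_of_ne hk hkn) (hg i hi)]
    simp only [Finset.mul_sum]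

lemma Ffun_add (hρ : 0 < ρ) (hk : k ≤ n) {g h : ℝ → ℝ} (hg : ContinuousOn g (Icc 0 1))
    (hh : ContinuousOn h (Icc 0 1)) :
    Ffun n k ρ (fun x => g x + h x) = Ffun n k ρ g + Ffun n k ρ h := by
  unfold Ffun
  split_ifs with hk0 hkn
  · rfl
  · rfl
  · have hkn' := lt_of_le_of_ne hk hkn
    simp only [mul_add]
    rw [intervalIntegral.integral_add (intervalIntegrable_Ffun_integrand hρ hk0 hkn' hg)
      (intervalIntegrable_Ffun_integrand hρ hk0 hkn' hh), mul_add]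

lemma Ffun_sub (hρ : 0 < ρ) (hk : k ≤ n) {g h : ℝ → ℝ} (hg : ContinuousOn g (Icc 0 1))
    (hh : ContinuousOn h (Icc 0 1)) :
    Ffun n k ρ (fun x => g x - h x) = Ffun n k ρ g - Ffun n k ρ h := by
  unfold Ffun
  split_ifs with hk0 hkn
  · rfl
  · rfl
  · have hkn' := lt_of_le_of_ne hk hkn
    simp only [mul_sub]
    rw [intervalIntegral.integral_sub (intervalIntegrable_Ffun_integrand hρ hk0 hkn' hg)
      (intervalIntegrable_Ffun_integrand hρ hk0 hkn' hh), mul_sub]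

end Ffun

section Uop

variable {n : ℕ} {ρ : ℝ}

lemma Uop_congr {g h : ℝ → ℝ} (hgh : ∀ k ≤ n, Ffun n k ρ g = Ffun n k ρ h) :
    Uop n ρ g = Uop n ρ h :=
  funext fun x => Finset.sum_congr rfl fun k hk => by
    rw [hgh k (Finset.mem_range_succ_iff.1 hk)]

lemma sum_bern (n : ℕ) (x : ℝ) : ∑ k ∈ Finset.range (n + 1), bern n k x = 1 := by
  simpa [bern, mul_comm, mul_assoc, mul_left_comm] using (add_pow x (1 - x) n).symm

lemma Uop_const (hρ : 0 < ρ) (c x : ℝ) : Uop n ρ (fun _ => c) x = c := by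
  unfold Uop
  rw [Finset.sum_congr rfl fun k hk => by rw [Ffun_const hρ (Finset.mem_range_succ_iff.1 hk)],
    ← Finset.mul_sum, sum_bern, mul_one]

lemma Uop_sum_mul_of_eigen (hρ : 0 < ρ) {ι : Type*} (s : Finset ι) {Q : ι → ℝ[X]} {μ : ι → ℝ}
    (hQ : ∀ i ∈ s, ∀ x, Uop n ρ (fun t => (Q i).eval t) x = μ i * (Q i).eval x)
    (c : ι → ℝ) (x : ℝ) :
    Uop n ρ (fun t => ∑ i ∈ s, c i * (Q i).eval t) x = ∑ i ∈ s, c i * (μ i * (Q i).eval x) := by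
  have hF : ∀ k ∈ Finset.range (n + 1), Ffun n k ρ (fun t => ∑ i ∈ s, c i * (Q i).eval t) =
      ∑ i ∈ s, c i * Ffun n k ρ (fun t => (Q i).eval t) := fun k hk => by
    rw [Ffun_sum hρ (Finset.mem_range_succ_iff.1 hk) s (g := fun i t => c i * (Q i).eval t)
      fun i _ => (continuous_const.mul (Q i).continuous).continuousOn]
    simp only [Ffun_const_mul]
  calc Uop n ρ (fun t => ∑ i ∈ s, c i * (Q i).eval t) x
      = ∑ i ∈ s, c i * Uop n ρ (fun t => (Q i).eval t) x := by
        simp only [Uop, Finset.sum_congr rfl fun k hk => congrArg (· * bern n k x) (hF k hk),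
          Finset.sum_mul, Finset.mul_sum, mul_assoc]
        exact Finset.sum_comm
    _ = ∑ i ∈ s, c i * (μ i * (Q i).eval x) :=
        Finset.sum_congr rfl fun i hi => by rw [hQ i hi x]

end Uop

section Iteration

variable {n : ℕ} {ρ : ℝ} {ι : Type*} {s : Finset ι} {Q : ι → ℝ[X]} {μ c : ι → ℝ} {f : ℝ → ℝ}

/-- `f - ∑ cᵢ Qᵢ` lies in the kernel of `U`, hence is fixed by `I - U`, while `I - U` scales each
`Qᵢ` by `1 - μᵢ`. -/
lemma iterate_sub_Uop_eq (hρ : 0 < ρ) (hf : ContinuousOn f (Icc 0 1))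
    (hQ : ∀ i ∈ s, ∀ x, Uop n ρ (fun t => (Q i).eval t) x = μ i * (Q i).eval x)
    (hF : ∀ k ≤ n, Ffun n k ρ (fun x => ∑ i ∈ s, c i * (Q i).eval x) = Ffun n k ρ f) (M : ℕ) :
    (fun (g : ℝ → ℝ) (y : ℝ) => g y - Uop n ρ g y)^[M] f = fun x =>
      f x - ∑ i ∈ s, c i * (Q i).eval x + ∑ i ∈ s, c i * (1 - μ i) ^ M * (Q i).eval x := by
  have hcont : ∀ a : ι → ℝ, ContinuousOn (fun x => ∑ i ∈ s, a i * (Q i).eval x) (Icc 0 1) :=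
    fun a => by fun_prop
  induction M with
  | zero => funext x; simp
  | succ M ih =>
    rw [Function.iterate_succ_apply', ih]
    have hU : Uop n ρ (fun x => f x - ∑ i ∈ s, c i * (Q i).eval x +
        ∑ i ∈ s, c i * (1 - μ i) ^ M * (Q i).eval x) =
        Uop n ρ (fun x => ∑ i ∈ s, c i * (1 - μ i) ^ M * (Q i).eval x) :=
      Uop_congr fun k hk => by
        rw [Ffun_add hρ hk (g := fun x => f x - _) (hf.sub (hcont c))
          (hcont fun i => c i * (1 - μ i) ^ M), Ffun_sub hρ hk hf (hcont c), hF k hk,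
          sub_self, zero_add]
    funext x
    rw [hU, Uop_sum_mul_of_eigen hρ s hQ]
    simp only [add_sub_assoc, ← Finset.sum_sub_distrib, pow_succ]
    congr 2 with i
    ring

lemma boolSum_sub_eq (hρ : 0 < ρ) (hf : ContinuousOn f (Icc 0 1))
    (hQ : ∀ i ∈ s, ∀ x, Uop n ρ (fun t => (Q i).eval t) x = μ i * (Q i).eval x)
    (hF : ∀ k ≤ n, Ffun n k ρ (fun x => ∑ i ∈ s, c i * (Q i).eval x) = Ffun n k ρ f)
    (M : ℕ) (x : ℝ) :
    boolSum n ρ M f x - ∑ i ∈ s, c i * (Q i).eval x =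
      -∑ i ∈ s, c i * (1 - μ i) ^ M * (Q i).eval x := by
  rw [boolSum, iterate_sub_Uop_eq hρ hf hQ hF]
  ring

end Iteration

lemma exists_sum_smul_eq_of_degree_eq {K : Type*} [Field K] {n : ℕ} {Q : Fin (n + 1) → K[X]}
    (hdeg : ∀ i, (Q i).degree = i) {p : K[X]} (hp : p.natDegree ≤ n) :
    ∃ c : Fin (n + 1) → K, ∑ i, c i • Q i = p := by
  let S : Polynomial.Sequence K :=
    { elems' := fun i => if h : i < n + 1 then Q ⟨i, h⟩ else X ^ i
      degree_eq' := fun i => by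
        split_ifs with h
        · exact hdeg _
        · exact degree_X_pow i }
  have hrange : Set.range Q = S '' Set.Iic n := by
    ext P
    constructor
    · rintro ⟨i, rfl⟩
      exact ⟨i, Fin.is_le i, dif_pos i.is_lt⟩
    · rintro ⟨i, hi, rfl⟩
      exact ⟨⟨i, Nat.lt_succ_of_le hi⟩, by simp [S, Nat.lt_succ_of_le hi]⟩
  have hmem : p ∈ Submodule.span K (Set.range Q) := by
    rw [hrange, S.span_degreeLE fun i _ => (leadingCoeff_ne_zero.2 (S.ne_zero i)).isUnit]
    exact mem_degreeLE.2 (natDegree_le_iff_degree_le.1 hp)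
  exact (Submodule.mem_span_range_iff_exists_fun K).1 hmem

lemma coeff_sum_smul_of_degree_eq {R : Type*} [Semiring R] {n : ℕ} {Q : Fin (n + 1) → R[X]}
    (hdeg : ∀ i, (Q i).degree = i) (c : Fin (n + 1) → R) :
    (∑ i, c i • Q i).coeff n = c (Fin.last n) * (Q (Fin.last n)).leadingCoeff := by
  have hnat : ∀ i, (Q i).natDegree = i := fun i => natDegree_eq_of_degree_eq_some (hdeg i)
  rw [finsetSum_coeff, Finset.sum_eq_single (Fin.last n)]
  · simp [leadingCoeff, hnat]
  · intro i _ hi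
    rw [coeff_smul, coeff_eq_zero_of_natDegree_lt (by rw [hnat]; exact Fin.val_lt_last hi),
      smul_zero]
  · simp

lemma tendstoUniformlyOn_finsetSum_mul_of_tendsto {X ι α : Type*} [TopologicalSpace X]
    {K : Set X} (hK : IsCompact K) {l : Filter α} (s : Finset ι) {a : ι → α → ℝ} {b : ι → ℝ}
    {g : ι → X → ℝ} (hg : ∀ i, ContinuousOn (g i) K)
    (ha : ∀ i ∈ s, Tendsto (a i) l (𝓝 (b i))) :
    TendstoUniformlyOn (fun m x => ∑ i ∈ s, a i m * g i x) (fun x => ∑ i ∈ s, b i * g i x) l K := by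
  have : CompactSpace K := isCompact_iff_compactSpace.1 hK
  have hcont : ∀ d : ι → ℝ, ContinuousOn (fun x => ∑ i ∈ s, d i * g i x) K := fun d =>
    continuousOn_finsetSum s fun i _ => continuousOn_const.mul (hg i)
  rw [← (hcont b).tendsto_domRestrict_iff_tendstoUniformlyOn fun m => hcont fun i => a i m]
  have key := tendsto_finsetSum s fun i hi =>
    (ha i hi).smul_const (⟨_, (hg i).domRestrict⟩ : C(K, ℝ))
  convert key using 1
  · funext m
    ext x
    simp
  · congr 1
    ext x
    simp

lemma tendstoUniformlyOn_inv_pow_mul_sum {X ι : Type*} [TopologicalSpace X] [Fintype ι]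
    [DecidableEq ι] {K : Set X} (hK : IsCompact K) {μ : ι → ℝ} {i₀ : ι} (h₀ : μ i₀ < 1)
    (hμ : ∀ i ≠ i₀, μ i₀ < μ i ∧ μ i ≤ 1) (c : ι → ℝ) {g : ι → X → ℝ}
    (hg : ∀ i, ContinuousOn (g i) K) :
    TendstoUniformlyOn (fun M x => ((1 - μ i₀) ^ M)⁻¹ * ∑ i, c i * (1 - μ i) ^ M * g i x)
      (fun x => c i₀ * g i₀ x) atTop K := by
  have hgap : 0 < 1 - μ i₀ := sub_pos.2 h₀
  have hratio : ∀ i, Tendsto (fun M => c i * ((1 - μ i) / (1 - μ i₀)) ^ M) atTop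
      (𝓝 (if i = i₀ then c i₀ else 0)) := fun i => by
    split_ifs with hi
    · subst hi
      simp [div_self hgap.ne']
    · obtain ⟨hlt, hle⟩ := hμ i hi
      simpa using (tendsto_pow_atTop_nhds_zero_of_lt_one (div_nonneg (sub_nonneg.2 hle) hgap.le)
        ((div_lt_one hgap).2 (by linarith))).const_mul (c i)
  convert tendstoUniformlyOn_finsetSum_mul_of_tendsto hK Finset.univ hg
    fun i _ => hratio i using 1
  · funext M x
    rw [Finset.mul_sum]
    congr 1 with i
    rw [div_pow]
    field_simp
  · simp

lemma last_lt_and_le_one_of_decreasing {n : ℕ} (hn : 2 ≤ n) {lam : Fin (n + 1) → ℝ}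
    (hlam0 : lam 0 = 1) (hlam1 : lam 1 = 1)
    (hlamdec : ∀ j k : Fin (n + 1), 1 ≤ (j : ℕ) → j < k → lam k < lam j) :
    ∀ i ≠ Fin.last n, lam (Fin.last n) < lam i ∧ lam i ≤ 1 := by
  have hone : ((1 : Fin (n + 1)) : ℕ) = 1 := by rw [Fin.val_one', Nat.mod_eq_of_lt (by omega)]
  have hlast : lam (Fin.last n) < 1 :=
    hlam1 ▸ hlamdec 1 _ hone.ge (by rw [Fin.lt_def, hone, Fin.val_last]; omega)
  intro i hi
  by_cases hi0 : i = 0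
  · exact hi0 ▸ ⟨hlam0 ▸ hlast, hlam0.le⟩
  by_cases hi1 : i = 1
  · exact hi1 ▸ ⟨hlam1 ▸ hlast, hlam1.le⟩
  have hi2 : 2 ≤ (i : ℕ) := by
    have := Fin.val_ne_iff.2 hi0
    have := Fin.val_ne_iff.2 hi1
    simp only [Fin.val_zero, hone] at *
    omega
  exact ⟨hlamdec i _ (by omega) (Fin.lt_last_iff_ne_last.2 hi),
      hlam1 ▸ (hlamdec 1 i hone.ge (by rw [Fin.lt_def, hone]; omega)).le⟩

lemma exists_Uop_eigenbasis {n : ℕ} (hn : n ≠ 0) {ρ : ℝ} (hρ : 0 < ρ) {q : Fin (n + 1) → ℝ[X]}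
    {lam : Fin (n + 1) → ℝ} (hdeg : ∀ k, (q k).natDegree = k)
    (heig : ∀ k x, Uop n ρ (fun t => (q k).eval t) x = lam k * (q k).eval x) (hlam0 : lam 0 = 1) :
    ∃ Q : Fin (n + 1) → ℝ[X], Q (Fin.last n) = q (Fin.last n) ∧ (∀ k, (Q k).degree = k) ∧
      ∀ k x, Uop n ρ (fun t => (Q k).eval t) x = lam k * (Q k).eval x := by
  -- `q 0` may vanish; since `U` fixes constants, `1` takes its place.
  refine ⟨Function.update q 0 1, Function.update_of_ne (Fin.ext_iff.not.2 (by simpa using hn)) _ _,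
    fun k => ?_, fun k x => ?_⟩ <;> rcases eq_or_ne k 0 with rfl | hk
  · simp
  · have hq : q k ≠ 0 := fun h => hk (Fin.ext (by simpa [h] using (hdeg k).symm))
    rw [Function.update_of_ne hk, degree_eq_natDegree hq, hdeg, Nat.cast_withBot]
  · simp [hlam0, Uop_const hρ]
  · simpa [hk] using heig k x

theorem boolSum_asymptotics_general (n : ℕ) (hn : 2 ≤ n) (ρ : ℝ) (hρ : 0 < ρ)
    (q : Fin (n + 1) → Polynomial ℝ) (lam : Fin (n + 1) → ℝ)
    (hdeg : ∀ k, (q k).natDegree = (k : ℕ))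
    (heig : ∀ k, ∀ x : ℝ, Uop n ρ (fun t => (q k).eval t) x = lam k * (q k).eval x)
    (hmonic : (q (Fin.last n)).Monic)
    (hlam0 : lam 0 = 1) (hlam1 : lam 1 = 1)
    (hlamdec : ∀ j k : Fin (n + 1), 1 ≤ (j : ℕ) → j < k → lam k < lam j)
    (f : ℝ → ℝ) (hf : ContinuousOn f (Set.Icc 0 1))
    (L : Polynomial ℝ) (hLdeg : L.natDegree ≤ n)
    (hL : ∀ k ≤ n, Ffun n k ρ (fun x => L.eval x) = Ffun n k ρ f) :
    TendstoUniformlyOn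
      (fun (M : ℕ) (x : ℝ) =>
        ((1 - lam (Fin.last n)) ^ M)⁻¹ * (boolSum n ρ M f x - L.eval x))
      (fun x => -(L.coeff n) * (q (Fin.last n)).eval x)
      Filter.atTop (Set.Icc 0 1) := by
  obtain ⟨Q, hQlast, hQdeg, hQeig⟩ := exists_Uop_eigenbasis (by omega) hρ hdeg heig hlam0
  obtain ⟨c, hc⟩ := exists_sum_smul_eq_of_degree_eq hQdeg hLdeg
  have hLeval : ∀ x, L.eval x = ∑ i, c i * (Q i).eval x := fun x => by
    simp [← hc, eval_finsetSum]
  have hcn : L.coeff n = c (Fin.last n) := by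
    rw [← hc, coeff_sum_smul_of_degree_eq hQdeg, hQlast, hmonic.leadingCoeff, mul_one]
  have hgap := last_lt_and_le_one_of_decreasing hn hlam0 hlam1 hlamdec
  have hlim := tendstoUniformlyOn_inv_pow_mul_sum (isCompact_Icc (a := 0) (b := 1))
    (hlam0 ▸ (hgap 0 (Fin.ext_iff.not.2 (by simp only [Fin.val_zero, Fin.val_last]; omega))).1) hgap (fun i => -c i)
    (g := fun i x => (Q i).eval x) fun i => (Q i).continuous.continuousOn
  convert hlim using 2 with M
  · funext x
    rw [hLeval, boolSum_sub_eq hρ hf (fun i _ => hQeig i)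
      (fun k hk => by simp_rw [← hLeval]; exact hL k hk)]
    simp [Finset.sum_neg_distrib]
  · simp [hcn, hQlast]

/-- Let `n ≥ 2`, `ρ > 0`, and suppose `U_n^ρ` has eigenpolynomials `q_k` of exact
degree `k` with eigenvalues `1 = λ₀ = λ₁ > λ₂ > … > λ_n > 0`, where `q_n` is monic.
Then for every continuous `f`,
`(1−λ_n)^{−M}(⊕^M U_n^ρ f − L_n^ρ f) → −[F_{n,0}^ρ,…,F_{n,n}^ρ; f] · q_n`
uniformly on `[0,1]` as `M → ∞`. -/
theorem boolSum_asymptotics (n : ℕ) (hn : 2 ≤ n) (ρ : ℝ) (hρ : 0 < ρ)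
    (q : Fin (n + 1) → Polynomial ℝ) (lam : Fin (n + 1) → ℝ)
    (hdeg : ∀ k, (q k).natDegree = (k : ℕ))
    (heig : ∀ k, ∀ x : ℝ, Uop n ρ (fun t => (q k).eval t) x = lam k * (q k).eval x)
    (hmonic : (q (Fin.last n)).Monic)
    (hlam0 : lam 0 = 1) (hlam1 : lam 1 = 1)
    (hlamdec : ∀ j k : Fin (n + 1), 1 ≤ (j : ℕ) → j < k → lam k < lam j)
    (hlampos : 0 < lam (Fin.last n))
    (f : ℝ → ℝ) (hf : ContinuousOn f (Set.Icc 0 1))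
    (L : Polynomial ℝ) (hLdeg : L.natDegree ≤ n)
    (hL : ∀ k ≤ n, Ffun n k ρ (fun x => L.eval x) = Ffun n k ρ f) :
    TendstoUniformlyOn
      (fun (M : ℕ) (x : ℝ) =>
        ((1 - lam (Fin.last n)) ^ M)⁻¹ * (boolSum n ρ M f x - L.eval x))
      (fun x => -(L.coeff n) * (q (Fin.last n)).eval x)
      Filter.atTop (Set.Icc 0 1) :=
  boolSum_asymptotics_general n hn ρ hρ q lam hdeg heig hmonic hlam0 hlam1 hlamdec f hf L hLdeg hL
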